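/- Let F ⊆ ℕ² be a submonoid with extremal generators n₁, n₂ (ℚ-linearly independent, every element of F a nonnegative rational combination of them), and suppose int(C) = int(F) and both F ∩ τ₁ ≠ C ∩ τ₁ and the set (C \ F) ∩ τ₁ is finite and nonempty, where C = L_{ℚ≥0}({n₁,n₂}) ∩ ℕ² and τ₁ = ℚ≥0·n₁. Then F does not satisfy the combinatorial Cohen-Macaulay condition: there exists a ∈ C \ F with a + n₁ ∈ F and a + n₂ ∈ F. -/

import Mathlib

def toQ (p : ℤ × ℤ) : ℚ × ℚ := ((p.1 : ℚ), (p.2 : ℚ))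
def toR (p : ℤ × ℤ) : ℝ × ℝ := ((p.1 : ℝ), (p.2 : ℝ))
def isNat (p : ℤ × ℤ) : Prop := 0 ≤ p.1 ∧ 0 ≤ p.2
def inCone (n₁ n₂ a : ℤ × ℤ) : Prop :=
  ∃ q₁ q₂ : ℚ, 0 ≤ q₁ ∧ 0 ≤ q₂ ∧ toQ a = q₁ • toQ n₁ + q₂ • toQ n₂
def onRay (n a : ℤ × ℤ) : Prop := ∃ q : ℚ, 0 ≤ q ∧ toQ a = q • toQ n

/-! Among the finitely many points of `(C \ F) ∩ τ₁` pick `a` with `a + n₁` outside that set (a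
finite set is not stable under translation by `n₁ ≠ 0`). Since `a + n₁` still lies in `C ∩ τ₁`, it
lies in `F`; and by linear independence `a + n₂` lies on neither ray, hence in `int(C) = int(F)`. -/

theorem Set.Finite.exists_add_notMem {G : Type*} [AddCancelMonoid G] [IsAddTorsionFree G]
    {S : Set G} (hS : S.Finite) (hne : S.Nonempty) {n : G} (hn : n ≠ 0) :
    ∃ a ∈ S, a + n ∉ S := by
  by_contra! hstable
  obtain ⟨a, ha⟩ := hne
  have hmem : ∀ k : ℕ, a + k • n ∈ S := by
    intro k
    induction k with
    | zero => simpa using ha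
    | succ k ih => simpa [succ_nsmul, add_assoc] using hstable _ ih
  have hinj : Function.Injective fun k : ℕ => a + k • n :=
    (add_right_injective a).comp <|
      injective_nsmul_iff_not_isOfFinAddOrder.mpr (not_isOfFinAddOrder_of_isAddTorsionFree hn)
  exact Set.infinite_range_of_injective hinj (hS.subset (Set.range_subset_iff.mpr hmem))

@[simp]
lemma toQ_add (a b : ℤ × ℤ) : toQ (a + b) = toQ a + toQ b := by
  simp [toQ]

@[simp]
lemma toQ_zero : toQ 0 = 0 := rfl

lemma toQ_injective : Function.Injective toQ := by
  intro a b h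
  simp only [toQ, Prod.ext_iff, Int.cast_inj] at h
  exact Prod.ext h.1 h.2

lemma isNat.add {a b : ℤ × ℤ} (ha : isNat a) (hb : isNat b) : isNat (a + b) :=
  ⟨add_nonneg ha.1 hb.1, add_nonneg ha.2 hb.2⟩

lemma onRay.add {n a b : ℤ × ℤ} (ha : onRay n a) (hb : onRay n b) : onRay n (a + b) := by
  obtain ⟨q, hq, hqa⟩ := ha
  obtain ⟨r, hr, hrb⟩ := hb
  exact ⟨q + r, add_nonneg hq hr, by rw [toQ_add, hqa, hrb, add_smul]⟩

lemma onRay_self (n : ℤ × ℤ) : onRay n n := ⟨1, zero_le_one, (one_smul _ _).symm⟩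

lemma onRay.inCone {n₁ n₂ a : ℤ × ℤ} (ha : onRay n₁ a) : inCone n₁ n₂ a := by
  obtain ⟨q, hq, hqa⟩ := ha
  exact ⟨q, 0, hq, le_rfl, by rw [hqa, zero_smul, add_zero]⟩

lemma inCone.add_right {n₁ n₂ a : ℤ × ℤ} (ha : inCone n₁ n₂ a) : inCone n₁ n₂ (a + n₂) := by
  obtain ⟨q₁, q₂, hq₁, hq₂, hqa⟩ := ha
  exact ⟨q₁, q₂ + 1, hq₁, by positivity, by rw [toQ_add, hqa, add_smul, one_smul, add_assoc]⟩

section LinearIndependent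

variable {n₁ n₂ a : ℤ × ℤ} (hind : LinearIndependent ℚ ![toQ n₁, toQ n₂])
include hind

lemma onRay.not_onRay_add_right (ha : onRay n₁ a) : ¬ onRay n₁ (a + n₂) := by
  rintro ⟨r, -, hr⟩
  obtain ⟨q, -, hqa⟩ := ha
  have hzero : (q - r) • toQ n₁ + (1 : ℚ) • toQ n₂ = 0 := by
    rw [one_smul, sub_smul, ← hqa, ← hr, toQ_add]
    abel
  exact one_ne_zero (LinearIndependent.pair_iff.mp hind _ _ hzero).2

lemma onRay.not_onRay_right_add_right (ha : onRay n₁ a) (ha0 : a ≠ 0) :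
    ¬ onRay n₂ (a + n₂) := by
  rintro ⟨r, -, hr⟩
  obtain ⟨q, -, hqa⟩ := ha
  have hzero : q • toQ n₁ + (1 - r) • toQ n₂ = 0 := by
    rw [sub_smul, one_smul, ← hqa, ← hr, toQ_add]
    abel
  have hq : q = 0 := (LinearIndependent.pair_iff.mp hind _ _ hzero).1
  exact ha0 (toQ_injective (by rw [hqa, hq, zero_smul, toQ_zero]))

end LinearIndependent

theorem stmt11_general (F : AddSubmonoid (ℤ × ℤ)) (n₁ n₂ : ℤ × ℤ)
    (hnat : ∀ s ∈ F, isNat s)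
    (hind : LinearIndependent ℚ ![toQ n₁, toQ n₂])
    (hn₁ : n₁ ∈ F) (hn₂ : n₂ ∈ F)
    (hint : ∀ a : ℤ × ℤ,
      (isNat a ∧ inCone n₁ n₂ a ∧ ¬ onRay n₁ a ∧ ¬ onRay n₂ a) ↔
      (a ∈ F ∧ ¬ onRay n₁ a ∧ ¬ onRay n₂ a))
    -- F ∩ τ₁ ≠ C ∩ τ₁, with (C \ F) ∩ τ₁ finite and nonempty
    (hfin : {a : ℤ × ℤ | isNat a ∧ inCone n₁ n₂ a ∧ a ∉ F ∧ onRay n₁ a}.Finite)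
    (hne : {a : ℤ × ℤ | isNat a ∧ inCone n₁ n₂ a ∧ a ∉ F ∧ onRay n₁ a}.Nonempty) :
    ∃ a : ℤ × ℤ, isNat a ∧ inCone n₁ n₂ a ∧ a ∉ F ∧ a + n₁ ∈ F ∧ a + n₂ ∈ F := by
  have hn₁0 : n₁ ≠ 0 := by
    rintro rfl
    exact hind.ne_zero 0 rfl
  obtain ⟨a, ⟨haN, haC, haF, haRay⟩, hnext⟩ := hfin.exists_add_notMem hne hn₁0
  have hnext_ray : onRay n₁ (a + n₁) := haRay.add (onRay_self n₁)
  have ha0 : a ≠ 0 := fun h => haF (h ▸ F.zero_mem)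
  refine ⟨a, haN, haC, haF, ?_, ?_⟩
  · by_contra hF
    exact hnext ⟨haN.add (hnat _ hn₁), hnext_ray.inCone, hF, hnext_ray⟩
  · exact ((hint _).mp ⟨haN.add (hnat _ hn₂), haC.add_right,
      haRay.not_onRay_add_right hind, haRay.not_onRay_right_add_right hind ha0⟩).1

/-- Section 4 argument: if `int(C) = int(F)` but `(C \ F) ∩ τ₁` is finite and nonempty,
then `F` fails the combinatorial Cohen-Macaulay condition. -/
theorem stmt11 (F : AddSubmonoid (ℤ × ℤ)) (n₁ n₂ : ℤ × ℤ)
    (hnat : ∀ s ∈ F, isNat s)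
    (hind : LinearIndependent ℚ ![toQ n₁, toQ n₂])
    (hn₁ : n₁ ∈ F) (hn₂ : n₂ ∈ F)
    (hcone : ∀ s ∈ F, inCone n₁ n₂ s)
    (hint : ∀ a : ℤ × ℤ,
      (isNat a ∧ inCone n₁ n₂ a ∧ ¬ onRay n₁ a ∧ ¬ onRay n₂ a) ↔
      (a ∈ F ∧ ¬ onRay n₁ a ∧ ¬ onRay n₂ a))
    -- F ∩ τ₁ ≠ C ∩ τ₁, with (C \ F) ∩ τ₁ finite and nonempty
    (hfin : {a : ℤ × ℤ | isNat a ∧ inCone n₁ n₂ a ∧ a ∉ F ∧ onRay n₁ a}.Finite)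
    (hne : {a : ℤ × ℤ | isNat a ∧ inCone n₁ n₂ a ∧ a ∉ F ∧ onRay n₁ a}.Nonempty) :
    ∃ a : ℤ × ℤ, isNat a ∧ inCone n₁ n₂ a ∧ a ∉ F ∧ a + n₁ ∈ F ∧ a + n₂ ∈ F :=
  stmt11_general F n₁ n₂ hnat hind hn₁ hn₂ hint hfin hne
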